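/- For the n-qubit GHZ state |GHZ_n⟩ = (|0…0⟩ + |1…1⟩)/√2 with n ≥ 2, the entanglement eigenvalue equals 1/√2, hence E_G(GHZ_n) = 1/2. -/

import Mathlib

open scoped BigOperators
open Matrix

/-- The set of unit-norm fully separable pure states of `n` qubits. -/
def SepStates (n : ℕ) : Set ((Fin n → Fin 2) → ℂ) :=
  {φ | ∃ v : Fin n → (Fin 2 → ℂ),
    (∀ i, ∑ x : Fin 2, Complex.normSq (v i x) = 1) ∧
    ∀ f : Fin n → Fin 2, φ f = ∏ i : Fin n, v i (f i)}

/-- The entanglement eigenvalue `λ̂(ψ)`. -/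
noncomputable def EntEigenvalue (n : ℕ) (ψ : (Fin n → Fin 2) → ℂ) : ℝ :=
  sSup {r : ℝ | ∃ φ ∈ SepStates n, r = ‖star φ ⬝ᵥ ψ‖}

/-- Geometric measure of entanglement. -/
noncomputable def GeomEnt (n : ℕ) (ψ : (Fin n → Fin 2) → ℂ) : ℝ :=
  1 - sSup {r : ℝ | ∃ φ ∈ SepStates n, r = (‖star φ ⬝ᵥ ψ‖)^2}

/-- The `n`-qubit GHZ state `(|0…0⟩ + |1…1⟩)/√2`. -/
noncomputable def GHZ (n : ℕ) : (Fin n → Fin 2) → ℂ :=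
  fun f => if (∀ i, f i = 0) ∨ (∀ i, f i = 1) then (1 / Real.sqrt 2 : ℝ) else 0

/-!
The overlap of a product state `φ` with `GHZ n` only sees the two amplitudes `φ 0` and `φ 1`
(at `|0…0⟩` and `|1…1⟩`), so `|⟨φ|GHZ⟩| ≤ (|φ 0| + |φ 1|)/√2`. Writing `aᵢ = |vᵢ 0|`,
`bᵢ = |vᵢ 1|` with `aᵢ² + bᵢ² = 1`, every factor is at most `1`, so for two distinct sites
`i ≠ j` we get `∏ a + ∏ b ≤ aᵢ aⱼ + bᵢ bⱼ ≤ 1` by Cauchy–Schwarz; this needs `n ≥ 2`.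
The bound `1/√2` is attained by the product state `|0…0⟩`.
-/

namespace Finset

variable {ι : Type*} [Fintype ι]

theorem prod_le_mul_of_le_one {c : ι → ℝ} {i j : ι} (hij : i ≠ j) (h0 : ∀ k, 0 ≤ c k)
    (h1 : ∀ k, c k ≤ 1) : ∏ k, c k ≤ c i * c j := by
  classical
  calc ∏ k, c k ≤ ∏ k ∈ {i, j}, c k :=
        prod_le_prod_of_subset_of_le_one (subset_univ _) (fun k _ => h0 k) (fun k _ _ => h1 k)
    _ = c i * c j := prod_pair hij

theorem prod_add_prod_le_one {a b : ι → ℝ} {i j : ι} (hij : i ≠ j) (ha : ∀ k, 0 ≤ a k)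
    (hb : ∀ k, 0 ≤ b k) (h : ∀ k, a k ^ 2 + b k ^ 2 = 1) : ∏ k, a k + ∏ k, b k ≤ 1 := by
  have ha1 : ∀ k, a k ≤ 1 := fun k => by nlinarith [ha k, h k, sq_nonneg (b k)]
  have hb1 : ∀ k, b k ≤ 1 := fun k => by nlinarith [hb k, h k, sq_nonneg (a k)]
  have cauchy_schwarz : a i * a j + b i * b j ≤ 1 := by
    nlinarith [h i, h j, sq_nonneg (a i - a j), sq_nonneg (b i - b j)]
  linarith [prod_le_mul_of_le_one hij ha ha1, prod_le_mul_of_le_one hij hb hb1]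

end Finset

variable {n : ℕ}

theorem single_mem_sepStates (f₀ : Fin n → Fin 2) : Pi.single f₀ (1 : ℂ) ∈ SepStates n := by
  refine ⟨fun i => Pi.single (f₀ i) 1,
    fun i => by simp [Pi.single_apply, apply_ite Complex.normSq], fun f => ?_⟩
  simp only [Pi.single_apply, Fintype.prod_ite_zero, Finset.prod_const_one, funext_iff]

theorem norm_apply_zero_add_norm_apply_one_le {φ : (Fin n → Fin 2) → ℂ} (hn : 2 ≤ n)
    (hφ : φ ∈ SepStates n) : ‖φ 0‖ + ‖φ 1‖ ≤ 1 := by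
  obtain ⟨v, hv, hφv⟩ := hφ
  rw [hφv, hφv, norm_prod, norm_prod]
  refine Finset.prod_add_prod_le_one (i := ⟨0, by omega⟩) (j := ⟨1, by omega⟩)
    (by simp [Fin.ext_iff]) (fun _ => norm_nonneg _) (fun _ => norm_nonneg _) fun i => ?_
  simpa only [Complex.sq_norm, Fin.sum_univ_two, Pi.zero_apply, Pi.one_apply] using hv i

theorem dotProduct_GHZ (hn : n ≠ 0) (φ : (Fin n → Fin 2) → ℂ) :
    star φ ⬝ᵥ GHZ n = (star (φ 0) + star (φ 1)) * (1 / Real.sqrt 2 : ℝ) := by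
  have h01 : (0 : Fin n → Fin 2) ≠ 1 := fun h => by
    simpa using congrFun h ⟨0, Nat.pos_of_ne_zero hn⟩
  rw [dotProduct, Fintype.sum_eq_add 0 1 h01, add_mul]
  · simp [GHZ]
  · rintro f ⟨hf0, hf1⟩
    have hf : ¬((∀ i, f i = 0) ∨ ∀ i, f i = 1) := by
      rintro (h | h)
      exacts [hf0 (funext h), hf1 (funext h)]
    simp [GHZ, hf]

theorem norm_dotProduct_GHZ_le (hn : 2 ≤ n) {φ : (Fin n → Fin 2) → ℂ} (hφ : φ ∈ SepStates n) :
    ‖star φ ⬝ᵥ GHZ n‖ ≤ 1 / Real.sqrt 2 := by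
  have hs : 0 ≤ 1 / Real.sqrt 2 := by positivity
  calc ‖star φ ⬝ᵥ GHZ n‖ = ‖star (φ 0) + star (φ 1)‖ * (1 / Real.sqrt 2) := by
        rw [dotProduct_GHZ (by omega), norm_mul, Complex.norm_real, Real.norm_of_nonneg hs]
    _ ≤ (‖φ 0‖ + ‖φ 1‖) * (1 / Real.sqrt 2) := by
        gcongr
        simpa only [norm_star] using norm_add_le (star (φ 0)) (star (φ 1))
    _ ≤ 1 / Real.sqrt 2 := mul_le_of_le_one_left hs (norm_apply_zero_add_norm_apply_one_le hn hφ)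

theorem star_single_dotProduct (f₀ : Fin n → Fin 2) (ψ : (Fin n → Fin 2) → ℂ) :
    star (Pi.single f₀ (1 : ℂ)) ⬝ᵥ ψ = ψ f₀ := by
  rw [← Pi.single_star, star_one, single_dotProduct, one_mul]

theorem isGreatest_norm_dotProduct_GHZ (hn : 2 ≤ n) :
    IsGreatest {r : ℝ | ∃ φ ∈ SepStates n, r = ‖star φ ⬝ᵥ GHZ n‖} (1 / Real.sqrt 2) := by
  refine ⟨⟨Pi.single 0 1, single_mem_sepStates 0, ?_⟩, ?_⟩
  · rw [star_single_dotProduct, GHZ, if_pos (Or.inl fun _ => Pi.zero_apply _), Complex.norm_real,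
      Real.norm_of_nonneg (by positivity)]
  · rintro r ⟨φ, hφ, rfl⟩
    exact norm_dotProduct_GHZ_le hn hφ

theorem entEigenvalue_eq_of_isGreatest {ψ : (Fin n → Fin 2) → ℂ} {c : ℝ}
    (h : IsGreatest {r : ℝ | ∃ φ ∈ SepStates n, r = ‖star φ ⬝ᵥ ψ‖} c) :
    EntEigenvalue n ψ = c :=
  h.csSup_eq

theorem geomEnt_eq_of_isGreatest {ψ : (Fin n → Fin 2) → ℂ} {c : ℝ}
    (h : IsGreatest {r : ℝ | ∃ φ ∈ SepStates n, r = ‖star φ ⬝ᵥ ψ‖} c) :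
    GeomEnt n ψ = 1 - c ^ 2 := by
  suffices hsq : IsGreatest {r : ℝ | ∃ φ ∈ SepStates n, r = ‖star φ ⬝ᵥ ψ‖ ^ 2} (c ^ 2) by
    rw [GeomEnt, hsq.csSup_eq]
  obtain ⟨⟨φ₀, hφ₀, rfl⟩, hle⟩ := h
  refine ⟨⟨φ₀, hφ₀, rfl⟩, ?_⟩
  rintro r ⟨φ, hφ, rfl⟩
  exact pow_le_pow_left₀ (norm_nonneg _) (hle ⟨φ, hφ, rfl⟩) 2

/-- For `n ≥ 2`, the entanglement eigenvalue of the GHZ state is `1/√2`,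
hence `E_G(GHZ_n) = 1/2`. -/
theorem ghz_entEigenvalue_and_geomEnt (n : ℕ) (hn : 2 ≤ n) :
    EntEigenvalue n (GHZ n) = 1 / Real.sqrt 2 ∧ GeomEnt n (GHZ n) = 1 / 2 := by
  have hmax := isGreatest_norm_dotProduct_GHZ hn
  refine ⟨entEigenvalue_eq_of_isGreatest hmax, ?_⟩
  rw [geomEnt_eq_of_isGreatest hmax, div_pow, Real.sq_sqrt zero_le_two]
  norm_num
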